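/- Let A be a hereditary graph property containing a graph which is neither a clique nor an edgeless graph. Then for every graph G, the polynomial P_A(G;x) = Σ_{S ⊆ V(G), G[S] ∈ A} x^{|S|} is real-rooted if and only if G ∈ A. -/

import Mathlib

/-!
If `G ∈ A`, every induced subgraph of `G` lies in `A`, so `P_A(G; x) = (1 + x) ^ n` with
`n = |V(G)|`. Otherwise every graph on at most two vertices still lies in `A` (it embeds into the
witness that is neither a clique nor edgeless), so `P_A(G; x) = 1 + n x + C(n, 2) x² + ⋯`, while
`V(G)` itself is missing and the degree `d` is less than `n`. Newton's inequality
`2 d a₀ a₂ ≤ (d - 1) a₁²` for a real-rooted polynomial of degree `d` then gives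
`d n (n - 1) ≤ (d - 1) n²`, i.e. `n ≤ d`, a contradiction.
-/

open Polynomial Finset

namespace Multiset

theorem esymm_cons_succ {R : Type*} [CommSemiring R] (a : R) (s : Multiset R) (k : ℕ) :
    (a ::ₘ s).esymm (k + 1) = a * s.esymm k + s.esymm (k + 1) := by
  simp only [esymm, powersetCard_cons, map_add, sum_add, map_map, Function.comp_def, prod_cons,
    sum_map_mul_left]
  ring

theorem esymm_one {R : Type*} [CommSemiring R] (s : Multiset R) : s.esymm 1 = s.sum := by
  simp [esymm, powersetCard_one]

theorem sq_sum_eq_sum_sq_add_two_mul_esymm_two {R : Type*} [CommRing R] (s : Multiset R) :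
    s.sum ^ 2 = (s.map (· ^ 2)).sum + 2 * s.esymm 2 := by
  induction s using Multiset.induction_on with
  | empty => simp [esymm, powersetCard_zero_right]
  | cons a s ih =>
    rw [sum_cons, map_cons, sum_cons, esymm_cons_succ, esymm_one]
    linear_combination ih

theorem sq_sum_le_card_mul_sum_sq (s : Multiset ℝ) :
    s.sum ^ 2 ≤ card s * (s.map (· ^ 2)).sum := by
  induction s using Multiset.induction_on with
  | empty => simp
  | cons a s ih =>
    have hsq : 0 ≤ (s.map (· ^ 2)).sum := sum_nonneg fun x hx => by
      obtain ⟨y, -, rfl⟩ := mem_map.mp hx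
      positivity
    rw [sum_cons, map_cons, sum_cons, card_cons]
    push_cast
    rcases (card s).eq_zero_or_pos with h0 | hpos
    · simp [card_eq_zero.mp h0]
    · have hpos : (0 : ℝ) < card s := by exact_mod_cast hpos
      -- multiply the claim by `card s` and complete the square `(card s * a - sum s) ^ 2`
      nlinarith [sq_nonneg (card s * a - s.sum), mul_le_mul_of_nonneg_left ih hpos.le]

theorem two_mul_card_mul_esymm_two_le (s : Multiset ℝ) :
    2 * card s * s.esymm 2 ≤ (card s - 1) * s.sum ^ 2 := by
  linear_combination -(card s : ℝ) * sq_sum_eq_sum_sq_add_two_mul_esymm_two s +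
    sq_sum_le_card_mul_sum_sq s

end Multiset

namespace Polynomial

theorem splits_of_forall_aeval_eq_zero_im_eq_zero {P : ℝ[X]}
    (h : ∀ z : ℂ, aeval z P = 0 → z.im = 0) : P.Splits := by
  refine (IsAlgClosed.splits (P.map Complex.ofRealHom)).of_splits_map _ fun z hz => ?_
  have hz0 : aeval z P = 0 := by
    rw [aeval_def, ← eval_map]
    exact (mem_roots'.mp hz).2
  exact ⟨z.re, Complex.ext (by simp) (by simp [h z hz0])⟩

theorem Splits.reverse {K : Type*} [Field K] {f : K[X]} (hf : f.Splits) : f.reverse.Splits := by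
  induction hf using Submonoid.closure_induction with
  | mem g hg =>
    obtain ⟨a, rfl⟩ | ⟨a, rfl⟩ := hg
    · simp
    · have hX : (X : K[X]).reverse = 1 := by
        rw [← one_mul X, reverse_mul_X, ← C_1, reverse_C]
      rcases eq_or_ne a 0 with rfl | ha
      · simp [hX]
      · have : (X + C a).reverse = C a * (X + C a⁻¹) := by
          rw [reverse_add_C, natDegree_X, pow_one, hX, mul_add, ← C_mul, mul_inv_cancel₀ ha,
            C_1, add_comm]
        rw [this]
        exact (Splits.X_add_C _).C_mul a
  | one => rw [← C_1, reverse_C]; exact Splits.C 1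
  | mul f g _ _ hf hg => rw [reverse_mul_of_domain]; exact hf.mul hg

theorem Splits.newton_leadingCoeff {P : ℝ[X]} (hP : P.Splits) (hd : 2 ≤ P.natDegree) :
    2 * P.natDegree * (P.leadingCoeff * P.coeff (P.natDegree - 2)) ≤
      (P.natDegree - 1) * P.coeff (P.natDegree - 1) ^ 2 := by
  have hcard : (Multiset.card P.roots : ℝ) = P.natDegree := by
    exact_mod_cast splits_iff_card_roots.mp hP
  have h1 : P.coeff (P.natDegree - 1) = -P.leadingCoeff * P.roots.sum := by
    rw [← nextCoeff_of_natDegree_pos (by omega), hP.nextCoeff_eq_neg_sum_roots_mul_leadingCoeff]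
  have h2 : P.coeff (P.natDegree - 2) = P.leadingCoeff * P.roots.esymm 2 := by
    rw [coeff_eq_esymm_roots_of_splits hP (by omega), Nat.sub_sub_self hd]
    ring
  have := mul_le_mul_of_nonneg_left P.roots.two_mul_card_mul_esymm_two_le
    (sq_nonneg P.leadingCoeff)
  rw [hcard] at this
  rw [h1, h2]
  linear_combination this

theorem Splits.newton_coeff_zero {P : ℝ[X]} (hP : P.Splits) (hd : 2 ≤ P.natDegree) :
    2 * P.natDegree * (P.coeff 0 * P.coeff 2) ≤ (P.natDegree - 1) * P.coeff 1 ^ 2 := by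
  rcases eq_or_ne (P.coeff 0) 0 with h0 | h0
  · have : (1 : ℝ) ≤ P.natDegree := by exact_mod_cast (by omega : 1 ≤ P.natDegree)
    rw [h0]
    nlinarith [sq_nonneg (P.coeff 1)]
  have htr : P.natTrailingDegree = 0 := natTrailingDegree_eq_zero.mpr (Or.inr h0)
  have hdeg : P.reverse.natDegree = P.natDegree := by rw [reverse_natDegree, htr, Nat.sub_zero]
  have hcoeff (k : ℕ) (hk : k ≤ P.natDegree) : P.reverse.coeff (P.natDegree - k) = P.coeff k := by
    rw [coeff_reverse, revAt_le (Nat.sub_le _ _), Nat.sub_sub_self hk]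
  have := hP.reverse.newton_leadingCoeff (hdeg ▸ hd)
  rwa [hdeg, hcoeff 1 (by omega), hcoeff 2 hd, reverse_leadingCoeff, trailingCoeff, htr] at this

theorem Splits.le_natDegree_of_coeff_eq_choose {P : ℝ[X]} (hP : P.Splits) {n : ℕ} (hn : 2 ≤ n)
    (hcoeff : ∀ k ≤ 2, P.coeff k = n.choose k) : n ≤ P.natDegree := by
  have h2 : P.coeff 2 = n * (n - 1) / 2 := by rw [hcoeff 2 le_rfl, Nat.cast_choose_two]
  have hd : 2 ≤ P.natDegree := le_natDegree_of_ne_zero fun h => by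
    rw [hcoeff 2 le_rfl] at h
    exact (Nat.choose_pos hn).ne' (by exact_mod_cast h)
  have := hP.newton_coeff_zero hd
  rw [hcoeff 0 (by norm_num), hcoeff 1 (by norm_num), h2, Nat.choose_zero_right,
    Nat.choose_one_right] at this
  have hn' : (2 : ℝ) ≤ n := by exact_mod_cast hn
  have : (n : ℝ) ≤ P.natDegree := by push_cast at this; nlinarith
  exact_mod_cast this

end Polynomial

section SumXPowCard

variable {R V : Type*}

theorem coeff_sum_X_pow_card [Semiring R] (F : Finset (Finset V)) (k : ℕ) :
    (∑ S ∈ F, (X : R[X]) ^ S.card).coeff k = #{S ∈ F | S.card = k} := by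
  simp only [finsetSum_coeff, coeff_X_pow, sum_boole, eq_comm]

theorem coeff_sum_X_pow_card_of_forall_mem [Semiring R] [Fintype V] {F : Finset (Finset V)} {k : ℕ}
    (hF : ∀ S : Finset V, S.card = k → S ∈ F) :
    (∑ S ∈ F, (X : R[X]) ^ S.card).coeff k = (Fintype.card V).choose k := by
  classical
  have : {S ∈ F | S.card = k} = powersetCard k univ := by
    ext S
    simp only [mem_filter, mem_powersetCard, subset_univ, true_and]
    exact ⟨And.right, fun hS => ⟨hF S hS, hS⟩⟩
  rw [coeff_sum_X_pow_card, this, card_powersetCard, card_univ]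

theorem natDegree_sum_X_pow_card_lt [Semiring R] [Fintype V] [Nonempty V] {F : Finset (Finset V)}
    (hF : univ ∉ F) :
    (∑ S ∈ F, (X : R[X]) ^ S.card).natDegree < Fintype.card V := by
  classical
  refine lt_of_le_of_lt ?_ (Nat.sub_one_lt Fintype.card_ne_zero)
  refine natDegree_le_iff_coeff_eq_zero.mpr fun k hk => ?_
  rw [coeff_sum_X_pow_card, filter_eq_empty_iff.mpr, card_empty, Nat.cast_zero]
  intro S hS hSk
  exact hF (eq_univ_of_card S (le_antisymm (card_le_univ S) (by omega)) ▸ hS)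

theorem sum_X_pow_card_univ [CommSemiring R] [Fintype V] :
    ∑ S : Finset V, (X : R[X]) ^ S.card = (X + 1) ^ Fintype.card V := by
  simpa using sum_pow_mul_eq_add_pow (X : R[X]) 1 (univ : Finset V)

end SumXPowCard

namespace SimpleGraph

variable {α β : Type*} {G : SimpleGraph α} {H : SimpleGraph β}

theorem nonempty_embedding_of_forall_eq_or_eq {x y : α} {a b : β} (hxy : ∀ z, z = x ∨ z = y)
    (hab : a ≠ b) (hadj : H.Adj a b ↔ G.Adj x y) : Nonempty (G ↪g H) := by
  classical
  have hy (z : α) (hz : z ≠ x) : z = y := (hxy z).resolve_left hz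
  refine ⟨⟨⟨fun z => if z = x then a else b, fun z w h => ?_⟩, fun {z w} => ?_⟩⟩
  · by_cases hz : z = x <;> by_cases hw : w = x
    · rw [hz, hw]
    · simp [hz, hw, hab] at h
    · simp [hz, hw, hab.symm] at h
    · rw [hy z hz, hy w hw]
  · change H.Adj (if z = x then a else b) (if w = x then a else b) ↔ G.Adj z w
    by_cases hz : z = x <;> by_cases hw : w = x
    · simp [hz, hw]
    · rw [if_pos hz, if_neg hw, hz, hy w hw, hadj]
    · rw [if_neg hz, if_pos hw, hw, hy z hz, H.adj_comm, G.adj_comm, hadj]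
    · simp [hy z hz, hy w hw]

theorem nonempty_embedding_of_card_le_two [Fintype α] (hα : Fintype.card α ≤ 2)
    (hadj : ∃ u v, H.Adj u v) (hnadj : ∃ u v, u ≠ v ∧ ¬ H.Adj u v) : Nonempty (G ↪g H) := by
  cases isEmpty_or_nonempty α with
  | inl _ => exact ⟨⟨Function.Embedding.ofIsEmpty, fun {z} => isEmptyElim z⟩⟩
  | inr _ =>
    obtain ⟨x, y, hxy⟩ : ∃ x y : α, ∀ z, z = x ∨ z = y := by
      by_contra! h
      obtain ⟨x⟩ := ‹Nonempty α›
      obtain ⟨y, hyx, -⟩ := h x x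
      obtain ⟨z, hzx, hzy⟩ := h x y
      exact absurd (Fintype.two_lt_card_iff.mpr ⟨x, y, z, hyx.symm, hzx.symm, hzy.symm⟩) (by omega)
    by_cases hG : G.Adj x y
    · obtain ⟨u, v, huv⟩ := hadj
      exact nonempty_embedding_of_forall_eq_or_eq hxy huv.ne (iff_of_true huv hG)
    · obtain ⟨p, q, hpq, hnpq⟩ := hnadj
      exact nonempty_embedding_of_forall_eq_or_eq hxy hpq (iff_of_false hnpq hG)

end SimpleGraph

def IsHereditary (A : ∀ ⦃α : Type⦄, SimpleGraph α → Prop) : Prop :=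
  ∀ ⦃α β : Type⦄ (H : SimpleGraph α) (H' : SimpleGraph β), Nonempty (H ↪g H') → A H' → A H

namespace IsHereditary

variable {A : ∀ ⦃α : Type⦄, SimpleGraph α → Prop} {V : Type} {G : SimpleGraph V}

theorem induce (hA : IsHereditary A) (hG : A G) (s : Set V) : A (G.induce s) :=
  hA _ _ ⟨SimpleGraph.Embedding.induce s⟩ hG

theorem of_induce_univ (hA : IsHereditary A) (hG : A (G.induce Set.univ)) : A G :=
  hA _ _ ⟨(SimpleGraph.induceUnivIso G).symm.toEmbedding⟩ hG

theorem of_card_le_two (hA : IsHereditary A) {β : Type} {H : SimpleGraph β} (hH : A H)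
    (hadj : ∃ u v, H.Adj u v) (hnadj : ∃ u v, u ≠ v ∧ ¬ H.Adj u v) [Fintype V]
    (hV : Fintype.card V ≤ 2) : A G :=
  hA _ _ (SimpleGraph.nonempty_embedding_of_card_le_two hV hadj hnadj) hH

end IsHereditary

/-- Let `A` be a hereditary graph property (containing the empty
graph) which contains a graph that is neither a clique nor an edgeless graph.
Then for every graph `G`, the polynomial `P_A(G;x) = Σ_{S, G[S] ∈ A} x^{|S|}` is
real-rooted iff `G ∈ A`. -/
theorem stmt_15 {V β : Type} [Fintype V] (G : SimpleGraph V)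
    (A : ∀ ⦃α : Type⦄, SimpleGraph α → Prop)
    (hA : ∀ ⦃α β : Type⦄ (H : SimpleGraph α) (H' : SimpleGraph β),
      Nonempty (H ↪g H') → A H' → A H)
    (hEmpty : A (⊥ : SimpleGraph Empty))
    (H0 : SimpleGraph β) (hH0 : A H0)
    (hnc : ¬ ∀ u v : β, u ≠ v → H0.Adj u v)
    (hne : ¬ ∀ u v : β, ¬ H0.Adj u v)
    [∀ S : Finset V, Decidable (A (G.induce (S : Set V)))]
    (P : Polynomial ℝ)
    (hP : P = ∑ S ∈ Finset.univ.filter (fun S : Finset V => A (G.induce (S : Set V))),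
      Polynomial.X ^ S.card) :
    (∀ z : ℂ, Polynomial.aeval z P = 0 → z.im = 0) ↔ A G := by
  have hA : IsHereditary A := hA
  have hsmall {W : Type} [Fintype W] (G' : SimpleGraph W) (hW : Fintype.card W ≤ 2) : A G' :=
    hA.of_card_le_two hH0 (by simpa using hne) (by simpa using hnc) hW
  set F := univ.filter fun S : Finset V => A (G.induce (S : Set V))
  subst hP
  constructor
  · intro hroots
    by_contra hG
    have hn : 2 < Fintype.card V := by
      by_contra! hn
      exact hG (hsmall G hn)
    have : Nonempty V := Fintype.card_pos_iff.mp (by omega)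
    have hdeg := natDegree_sum_X_pow_card_lt (R := ℝ) (F := F) fun hV =>
      hG (hA.of_induce_univ (coe_univ (α := V) ▸ (mem_filter.mp hV).2))
    have := (splits_of_forall_aeval_eq_zero_im_eq_zero hroots).le_natDegree_of_coeff_eq_choose
      hn.le fun k hk => coeff_sum_X_pow_card_of_forall_mem fun S hS =>
        mem_filter.mpr ⟨mem_univ S, hsmall _ (by simpa [hS] using hk)⟩
    omega
  · intro hG z hz
    have hF : F = univ := filter_true_of_mem fun S _ => hA.induce hG S
    rw [hF, sum_X_pow_card_univ] at hz
    obtain ⟨hz, -⟩ : z + 1 = 0 ∧ Fintype.card V ≠ 0 := by simpa using hz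
    simp [eq_neg_of_add_eq_zero_left hz]
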